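/- Lubkin's average purity formula: Let 1 ≤ m ≤ n, let G be the unitary group of complex matrices indexed by Fin m × Fin n, equipped with its Haar probability measure μ, and fix a unit vector ψ₀ ∈ ℂ^{Fin m × Fin n}. For U ∈ G let ψ_U = U·ψ₀, let ρ(U) = ψ_U ψ_U* be the corresponding rank-one density matrix, and let ρ_A(U) = tr_B ρ(U) be its partial trace over the second factor. Then the Haar average of the purity equals ∫_G Re tr(ρ_A(U)²) dμ(U) = (m+n)/(mn+1). -/

import Mathlib

open scoped BigOperators
open MeasureTheory

/-- The rank-one matrix `ψ ψ*`, with entries `(ψ ψ*)_{uv} = ψ u * conj (ψ v)`. -/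
noncomputable def vecProjector {ι : Type*} (ψ : ι → ℂ) : Matrix ι ι ℂ :=
  fun u v => ψ u * (starRingEnd ℂ) (ψ v)

/-- The partial trace over the second factor: `(tr_B ρ)_{ij} = ∑ μ, ρ_{(i,μ),(j,μ)}`. -/
noncomputable def ptraceB {m n : ℕ} (ρ : Matrix (Fin m × Fin n) (Fin m × Fin n) ℂ) :
    Matrix (Fin m) (Fin m) ℂ :=
  fun i j => ∑ μ, ρ (i, μ) (j, μ)

/-! For a Haar-random unitary `U`, left invariance of `μ` makes the moment tensor
`E[φ_a conj φ_b φ_c conj φ_d]` of `φ = U ψ₀` invariant under `V ⊗ conj V ⊗ V ⊗ conj V` for every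
unitary `V`. Diagonal phases kill every entry with `{a, c} ≠ {b, d}`; a square root of the
transposition of `a ≠ b` gives `E|φ_a|⁴ = E|φ_b|⁴ = 2 E|φ_a|²|φ_b|²`; and `∑ |φ_p|² = 1` then fixes
the Weingarten formula `E[φ_a conj φ_b φ_c conj φ_d] = (δ_ab δ_cd + δ_ad δ_cb) / (N (N + 1))`,
`N = m n`. Since `tr ρ_A² = ∑ φ_{iμ} conj φ_{jμ} φ_{jν} conj φ_{iν}`, the average purity is
`(m n² + m² n) / (m n (m n + 1))`. -/

open Matrix ComplexConjugate

section Quartic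

variable {ι : Type*}

def quartic (φ : ι → ℂ) (a b c d : ι) : ℂ :=
  φ a * conj (φ b) * (φ c * conj (φ d))

lemma quartic_mulVec [Fintype ι] (V : Matrix ι ι ℂ) (φ : ι → ℂ) (a b c d : ι) :
    quartic (V *ᵥ φ) a b c d = ∑ p, ∑ q, ∑ r, ∑ s,
      V a p * conj (V b q) * (V c r * conj (V d s)) * quartic φ p q r s := by
  simp only [quartic, mulVec, dotProduct, map_sum, map_mul, Finset.sum_mul_sum]
  refine Finset.sum_congr rfl fun p _ => ?_
  rw [Finset.sum_comm]
  exact Finset.sum_congr rfl fun q _ => Finset.sum_congr rfl fun r _ =>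
    Finset.sum_congr rfl fun s _ => by ring

lemma trace_ptraceB_vecProjector_sq {m n : ℕ} (φ : Fin m × Fin n → ℂ) :
    ((ptraceB (vecProjector φ)) ^ 2).trace = ∑ p, ∑ q, quartic φ p (q.1, p.2) q (p.1, q.2) := by
  simp only [sq, trace, diag, mul_apply, ptraceB, vecProjector, Fintype.sum_prod_type,
    Finset.sum_mul_sum]
  refine Finset.sum_congr rfl fun i _ => ?_
  rw [Finset.sum_comm]
  rfl

end Quartic

section UnitaryMatrices

variable {ι : Type*} [DecidableEq ι]

open Complex in
/-- Its square is the transposition matrix of `a` and `b`; row `a` is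
`((1 + i) e_a + (1 - i) e_b) / 2`, which mixes `a` and `b` with equal weights. -/
noncomputable def sqrtSwap (a b : ι) : Matrix ι ι ℂ :=
  ((1 + I) / 2) • 1 + ((1 - I) / 2) • (Equiv.swap a b).permMatrix ℂ

open Complex in
lemma sqrtSwap_apply_left (a b p : ι) :
    sqrtSwap a b a p = (if a = p then (1 + I) / 2 else 0) + (if b = p then (1 - I) / 2 else 0) := by
  simp [sqrtSwap, one_apply, PEquiv.toMatrix_apply, Equiv.toPEquiv_apply]

variable [Fintype ι]

open Complex in
lemma sqrtSwap_mem_unitaryGroup (a b : ι) : sqrtSwap a b ∈ unitaryGroup ι ℂ := by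
  have hP : (Equiv.swap a b).permMatrix ℂ * (Equiv.swap a b).permMatrix ℂ = 1 := by
    rw [← permMatrix_mul, Equiv.swap_mul_self, permMatrix_one]
  rw [mem_unitaryGroup_iff', sqrtSwap, star_eq_conjTranspose]
  simp only [conjTranspose_add, conjTranspose_smul, star_div₀, star_add, star_one, RCLike.star_def,
    conj_I, star_ofNat, conjTranspose_one, star_sub, sub_neg_eq_add, conjTranspose_permMatrix,
    Equiv.swap_inv, mul_add, add_mul, Algebra.mul_smul_comm, Algebra.smul_mul_assoc, mul_one,
    one_mul, smul_add, hP]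
  match_scalars
  · linear_combination (-1 / 2 : ℂ) * I_sq
  · linear_combination (1 / 2 : ℂ) * I_sq

lemma diagonal_mem_unitaryGroup {e : ι → ℂ} (he : ∀ x, conj (e x) * e x = 1) :
    diagonal e ∈ unitaryGroup ι ℂ := by
  rw [mem_unitaryGroup_iff', star_eq_conjTranspose, diagonal_conjTranspose,
    diagonal_mul_diagonal]
  exact diagonal_eq_one.mpr (funext he)

lemma norm_unitary_mulVec_apply_le (U : unitaryGroup ι ℂ) (ψ : ι → ℂ) (a : ι) :
    ‖((U : Matrix ι ι ℂ) *ᵥ ψ) a‖ ≤ ∑ b, ‖ψ b‖ := by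
  refine (norm_sum_le _ _).trans (Finset.sum_le_sum fun b _ => ?_)
  rw [norm_mul]
  exact mul_le_of_le_one_left (norm_nonneg _) (entry_norm_bound_of_unitary U.2 a b)

lemma sum_unitary_mulVec_mul_conj (U : unitaryGroup ι ℂ) (ψ : ι → ℂ) :
    ∑ p, ((U : Matrix ι ι ℂ) *ᵥ ψ) p * conj (((U : Matrix ι ι ℂ) *ᵥ ψ) p) =
      ∑ p, ψ p * conj (ψ p) := by
  have h : star ((U : Matrix ι ι ℂ) *ᵥ ψ) ⬝ᵥ ((U : Matrix ι ι ℂ) *ᵥ ψ) = star ψ ⬝ᵥ ψ := by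
    rw [star_mulVec, dotProduct_mulVec, vecMul_vecMul, ← star_eq_conjTranspose,
      UnitaryGroup.star_mul_self, vecMul_one]
  simpa [dotProduct, mul_comm] using h

end UnitaryMatrices

section Moments

variable {ι : Type*} [Fintype ι] [DecidableEq ι] [MeasurableSpace (unitaryGroup ι ℂ)]
  (μ : Measure (unitaryGroup ι ℂ)) (ψ : ι → ℂ)

noncomputable def quarticMoment (a b c d : ι) : ℂ :=
  ∫ U : unitaryGroup ι ℂ, quartic ((U : Matrix ι ι ℂ) *ᵥ ψ) a b c d ∂μ

lemma quarticMoment_comm (a b c d : ι) :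
    quarticMoment μ ψ a b c d = quarticMoment μ ψ c d a b := by
  simp only [quarticMoment, quartic, mul_comm]

lemma quarticMoment_swap (a b c d : ι) :
    quarticMoment μ ψ a b c d = quarticMoment μ ψ a d c b := by
  simp only [quarticMoment, quartic]
  congr 1 with U
  ring

variable [BorelSpace (unitaryGroup ι ℂ)]

lemma integrable_quartic_mulVec [IsFiniteMeasure μ] (a b c d : ι) :
    Integrable (fun U : unitaryGroup ι ℂ => quartic ((U : Matrix ι ι ℂ) *ᵥ ψ) a b c d) μ := by
  have hcont : Continuous fun U : unitaryGroup ι ℂ => (U : Matrix ι ι ℂ) *ᵥ ψ :=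
    continuous_subtype_val.matrix_mulVec continuous_const
  refine .of_bound (by unfold quartic; fun_prop) ((∑ x, ‖ψ x‖) ^ 4) (ae_of_all _ fun U => ?_)
  have h := norm_unitary_mulVec_apply_le U ψ
  simp only [quartic, norm_mul, RCLike.norm_conj]
  calc _ ≤ (∑ x, ‖ψ x‖) * (∑ x, ‖ψ x‖) * ((∑ x, ‖ψ x‖) * (∑ x, ‖ψ x‖)) := by
        gcongr <;> apply h
    _ = _ := by ring

lemma integrable_sum_sum_quartic [IsFiniteMeasure μ] (a b c d : ι → ι → ι) :
    Integrable (fun U : unitaryGroup ι ℂ =>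
      ∑ p, ∑ q, quartic ((U : Matrix ι ι ℂ) *ᵥ ψ) (a p q) (b p q) (c p q) (d p q)) μ :=
  integrable_finsetSum _ fun _ _ => integrable_finsetSum _ fun _ _ =>
    integrable_quartic_mulVec μ ψ _ _ _ _

lemma integral_sum_sum_quartic [IsFiniteMeasure μ] (a b c d : ι → ι → ι) :
    ∫ U, ∑ p, ∑ q, quartic ((U : Matrix ι ι ℂ) *ᵥ ψ) (a p q) (b p q) (c p q) (d p q) ∂μ =
      ∑ p, ∑ q, quarticMoment μ ψ (a p q) (b p q) (c p q) (d p q) := by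
  rw [integral_finsetSum _ fun _ _ => integrable_finsetSum _ fun _ _ =>
    integrable_quartic_mulVec μ ψ _ _ _ _]
  exact Finset.sum_congr rfl fun p _ =>
    integral_finsetSum _ fun q _ => integrable_quartic_mulVec μ ψ _ _ _ _

lemma quarticMoment_eq_sum [IsFiniteMeasure μ] [μ.IsMulLeftInvariant] (V : unitaryGroup ι ℂ)
    (a b c d : ι) :
    quarticMoment μ ψ a b c d = ∑ p, ∑ q, ∑ r, ∑ s,
      V a p * conj (V b q) * (V c r * conj (V d s)) * quarticMoment μ ψ p q r s := by
  have hV (U : unitaryGroup ι ℂ) :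
      quartic (((V * U : unitaryGroup ι ℂ) : Matrix ι ι ℂ) *ᵥ ψ) a b c d =
        ∑ p, ∑ q, ∑ r, ∑ s, V a p * conj (V b q) * (V c r * conj (V d s)) *
          quartic ((U : Matrix ι ι ℂ) *ᵥ ψ) p q r s := by
    rw [UnitaryGroup.mul_val, ← mulVec_mulVec, quartic_mulVec]
  rw [quarticMoment, ← integral_mul_left_eq_self _ V]
  simp only [hV, quarticMoment]
  have h4 (p q r s : ι) := (integrable_quartic_mulVec μ ψ p q r s).const_mul
    (V a p * conj (V b q) * (V c r * conj (V d s)))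
  have h3 (p q r : ι) := integrable_finsetSum Finset.univ fun s _ => h4 p q r s
  have h2 (p q : ι) := integrable_finsetSum Finset.univ fun r _ => h3 p q r
  rw [integral_finsetSum _ fun p _ => integrable_finsetSum _ fun q _ => h2 p q]
  refine Finset.sum_congr rfl fun p _ => ?_
  rw [integral_finsetSum _ fun q _ => h2 p q]
  refine Finset.sum_congr rfl fun q _ => ?_
  rw [integral_finsetSum _ fun r _ => h3 p q r]
  refine Finset.sum_congr rfl fun r _ => ?_
  rw [integral_finsetSum _ fun s _ => h4 p q r s]
  exact Finset.sum_congr rfl fun s _ => integral_const_mul _ _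

/-- The diagonal unitary with phase `i` at `k` multiplies the moment by
`i ^ #{k in a, c} * (-i) ^ #{k in b, d}`, which is not `1` for a suitable `k`. -/
lemma quarticMoment_eq_zero_of_ne [IsFiniteMeasure μ] [μ.IsMulLeftInvariant] {a b c d : ι}
    (h : s(a, c) ≠ s(b, d)) : quarticMoment μ ψ a b c d = 0 := by
  obtain ⟨k, hk⟩ : ∃ k, ((if a = k then 1 else 0) + (if c = k then 1 else 0) : ℕ) ≠
      (if b = k then 1 else 0) + (if d = k then 1 else 0) := by
    rw [Ne, Sym2.eq_iff] at h
    by_contra! H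
    have := H a
    have := H c
    grind
  let e : ι → ℂ := fun x => if x = k then Complex.I else 1
  have hf : e a * conj (e b) * (e c * conj (e d)) ≠ 1 := by
    simp only [e]
    split_ifs at hk ⊢ <;> simp [Complex.ext_iff] at hk ⊢ <;> norm_num
  have he (x : ι) : conj (e x) * e x = 1 := by
    by_cases hx : x = k <;> simp [e, hx]
  have hD := quarticMoment_eq_sum μ ψ ⟨diagonal e, diagonal_mem_unitaryGroup he⟩ a b c d
  simp only [diagonal_apply, apply_ite (starRingEnd ℂ), map_zero, mul_ite, ite_mul, zero_mul,
    mul_zero, Finset.sum_ite_eq, Finset.mem_univ, ↓reduceIte] at hD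
  by_contra hM
  exact hf (mul_right_cancel₀ hM (hD.symm.trans (one_mul _).symm))

lemma four_mul_quarticMoment_self [IsFiniteMeasure μ] [μ.IsMulLeftInvariant] {a b : ι}
    (hab : a ≠ b) :
    4 * quarticMoment μ ψ a a a a =
      quarticMoment μ ψ a a a a + quarticMoment μ ψ b b b b + 4 * quarticMoment μ ψ a a b b := by
  have h := quarticMoment_eq_sum μ ψ ⟨sqrtSwap a b, sqrtSwap_mem_unitaryGroup a b⟩ a a a a
  -- of the 16 terms, the 10 with `{p, r} ≠ {q, s}` vanish; the other 6 have weight `1 / 4`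
  simp only [sqrtSwap_apply_left, map_add, apply_ite (starRingEnd ℂ), map_div₀, map_one,
    Complex.conj_I, map_ofNat, map_zero, map_sub, sub_neg_eq_add, mul_add, mul_ite, add_mul,
    ite_mul, zero_mul, mul_zero, Finset.sum_add_distrib, Finset.sum_ite_eq, Finset.mem_univ,
    ↓reduceIte] at h
  simp only [quarticMoment_eq_zero_of_ne μ ψ, ne_eq, Sym2.eq, Sym2.rel_iff', Prod.mk.injEq, hab,
    hab.symm, and_true, and_false, and_self, Prod.swap_prod_mk, or_self, not_false_eq_true,
    mul_zero, add_zero, zero_add] at h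
  rw [quarticMoment_comm μ ψ b b, quarticMoment_swap μ ψ a b, quarticMoment_swap μ ψ b a,
    quarticMoment_comm μ ψ b b] at h
  linear_combination (norm := ring_nf) 4 * h
  simp only [Complex.I_sq, Complex.I_pow_four]
  ring

lemma quarticMoment_self_eq [IsFiniteMeasure μ] [μ.IsMulLeftInvariant] (a b : ι) :
    quarticMoment μ ψ a a a a = quarticMoment μ ψ b b b b := by
  rcases eq_or_ne a b with rfl | hab
  · rfl
  linear_combination (four_mul_quarticMoment_self μ ψ hab
    - four_mul_quarticMoment_self μ ψ hab.symm) / 4 + quarticMoment_comm μ ψ a a b b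

lemma two_mul_quarticMoment_pair [IsFiniteMeasure μ] [μ.IsMulLeftInvariant] {a b : ι}
    (hab : a ≠ b) : 2 * quarticMoment μ ψ a a b b = quarticMoment μ ψ a a a a := by
  linear_combination (quarticMoment_self_eq μ ψ a b - four_mul_quarticMoment_self μ ψ hab) / 2

lemma sum_quarticMoment_pair [IsProbabilityMeasure μ] (hψ : ∑ p, Complex.normSq (ψ p) = 1) :
    ∑ p, ∑ q, quarticMoment μ ψ p p q q = 1 := by
  have hunit : ∑ p, ψ p * conj (ψ p) = 1 := by
    simp [Complex.mul_conj, ← Complex.ofReal_sum, hψ]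
  have hpt (U : unitaryGroup ι ℂ) : ∑ p, ∑ q, quartic ((U : Matrix ι ι ℂ) *ᵥ ψ) p p q q = 1 := by
    rw [← one_mul 1, ← hunit, ← sum_unitary_mulVec_mul_conj U, Finset.sum_mul_sum]
    rfl
  rw [← integral_sum_sum_quartic μ ψ (fun p _ => p) (fun p _ => p) (fun _ q => q) (fun _ q => q)]
  simp [hpt]

lemma quarticMoment_pair [IsProbabilityMeasure μ] [μ.IsMulLeftInvariant]
    (hψ : ∑ p, Complex.normSq (ψ p) = 1) (p q : ι) :
    quarticMoment μ ψ p p q q =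
      (1 + if p = q then 1 else 0) / (Fintype.card ι * (Fintype.card ι + 1)) := by
  generalize hA : quarticMoment μ ψ p p p p = A
  have hpair (r s : ι) : quarticMoment μ ψ r r s s = (1 + if r = s then 1 else 0) * (A / 2) := by
    split_ifs with hrs
    · rw [hrs, quarticMoment_self_eq μ ψ s p, hA]
      ring
    · linear_combination (two_mul_quarticMoment_pair μ ψ hrs
        + quarticMoment_self_eq μ ψ r p + hA) / 2
  have hnorm := sum_quarticMoment_pair μ ψ hψ
  simp only [hpair, add_mul, Finset.sum_add_distrib, one_mul, ite_mul, zero_mul,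
    Finset.sum_ite_eq, Finset.mem_univ, if_true, Finset.sum_const, Finset.card_univ,
    nsmul_eq_mul] at hnorm
  have hN : (Fintype.card ι * (Fintype.card ι + 1) : ℂ) ≠ 0 := fun h0 =>
    one_ne_zero (hnorm.symm.trans (by linear_combination (A / 2) * h0))
  rw [hpair, eq_div_iff hN]
  linear_combination (1 + if p = q then (1 : ℂ) else 0) * hnorm

lemma quarticMoment_eq [IsProbabilityMeasure μ] [μ.IsMulLeftInvariant]
    (hψ : ∑ p, Complex.normSq (ψ p) = 1) (a b c d : ι) :
    quarticMoment μ ψ a b c d =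
      ((if a = b ∧ c = d then 1 else 0) + (if a = d ∧ c = b then 1 else 0)) /
        (Fintype.card ι * (Fintype.card ι + 1)) := by
  by_cases h : s(a, c) = s(b, d)
  · rcases Sym2.eq_iff.mp h with ⟨rfl, rfl⟩ | ⟨rfl, rfl⟩
    · rcases eq_or_ne a c with rfl | hac <;> simp [quarticMoment_pair μ ψ hψ, *, Ne.symm]
    · rw [quarticMoment_swap]
      rcases eq_or_ne a c with rfl | hac <;>
        simp [quarticMoment_pair μ ψ hψ, *, Ne.symm, add_comm]
  · rw [quarticMoment_eq_zero_of_ne μ ψ h]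
    rw [Sym2.eq_iff, not_or] at h
    simp [h.1, h.2]

end Moments

lemma sum_sum_exchange_indicators (m n : ℕ) :
    (∑ p : Fin m × Fin n, ∑ q : Fin m × Fin n,
      ((if p = (q.1, p.2) ∧ q = (p.1, q.2) then 1 else 0) +
        (if p = (p.1, q.2) ∧ q = (q.1, p.2) then 1 else 0)) : ℂ) = m * n * (m + n) := by
  have h {α : Type} (x y : α) : (x = y ∧ y = x) ↔ x = y := ⟨And.left, fun h => ⟨h, h.symm⟩⟩
  simp only [Fintype.sum_prod_type, Prod.mk.injEq, and_true, true_and, h]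
  simp [Finset.sum_add_distrib]
  ring

theorem lubkin_average_purity_general (m n : ℕ)
    (ψ0 : Fin m × Fin n → ℂ)
    (hψ0 : ∑ p : Fin m × Fin n, Complex.normSq (ψ0 p) = 1)
    {mG : MeasurableSpace (Matrix.unitaryGroup (Fin m × Fin n) ℂ)}
    (hborel : mG = borel (Matrix.unitaryGroup (Fin m × Fin n) ℂ))
    (μ : Measure (Matrix.unitaryGroup (Fin m × Fin n) ℂ))
    (hHaar : μ.IsHaarMeasure) (hprob : IsProbabilityMeasure μ) :
    ∫ U : Matrix.unitaryGroup (Fin m × Fin n) ℂ,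
        (((ptraceB (vecProjector
            ((U : Matrix (Fin m × Fin n) (Fin m × Fin n) ℂ).mulVec ψ0))) ^ 2).trace).re ∂μ =
      ((m : ℝ) + n) / ((m : ℝ) * n + 1) := by
  have : BorelSpace (Matrix.unitaryGroup (Fin m × Fin n) ℂ) := ⟨hborel⟩
  have hmn : (m : ℂ) ≠ 0 ∧ (n : ℂ) ≠ 0 := by
    obtain ⟨⟨i, j⟩, -, -⟩ := Finset.exists_ne_zero_of_sum_ne_zero (hψ0.trans_ne one_ne_zero)
    exact ⟨Nat.cast_ne_zero.mpr i.pos.ne', Nat.cast_ne_zero.mpr j.pos.ne'⟩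
  simp_rw [trace_ptraceB_vecProjector_sq, ← RCLike.re_to_complex]
  rw [integral_re (integrable_sum_sum_quartic μ ψ0 _ _ _ _), integral_sum_sum_quartic]
  simp only [quarticMoment_eq μ ψ0 hψ0, ← Finset.sum_div, sum_sum_exchange_indicators,
    Fintype.card_prod, Fintype.card_fin, Nat.cast_mul]
  rw [mul_div_mul_left _ _ (mul_ne_zero hmn.1 hmn.2), RCLike.re_to_complex,
    show ((m : ℂ) + n) / (m * n + 1) = (((m + n) / (m * n + 1) : ℝ) : ℂ) by push_cast; rfl]
  exact Complex.ofReal_re _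

/-- **Lubkin's average purity formula.** For `1 ≤ m ≤ n` and a Haar-random unitary `U` on
`ℂ^{m·n}` applied to a fixed unit vector `ψ₀`, the average purity of the reduced state
`ρ_A(U) = tr_B (ψ_U ψ_U*)` equals `(m+n)/(mn+1)`. -/
theorem lubkin_average_purity (m n : ℕ) (hm : 1 ≤ m) (hmn : m ≤ n)
    (ψ0 : Fin m × Fin n → ℂ)
    (hψ0 : ∑ p : Fin m × Fin n, Complex.normSq (ψ0 p) = 1)
    {mG : MeasurableSpace (Matrix.unitaryGroup (Fin m × Fin n) ℂ)}
    (hborel : mG = borel (Matrix.unitaryGroup (Fin m × Fin n) ℂ))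
    (μ : Measure (Matrix.unitaryGroup (Fin m × Fin n) ℂ))
    (hHaar : μ.IsHaarMeasure) (hprob : IsProbabilityMeasure μ) :
    ∫ U : Matrix.unitaryGroup (Fin m × Fin n) ℂ,
        (((ptraceB (vecProjector
            ((U : Matrix (Fin m × Fin n) (Fin m × Fin n) ℂ).mulVec ψ0))) ^ 2).trace).re ∂μ =
      ((m : ℝ) + n) / ((m : ℝ) * n + 1) :=
  lubkin_average_purity_general m n ψ0 hψ0 hborel μ hHaar hprob
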